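/- The Best-first allocation makes at least as many trades as the optimal allocation: the number of ask-bid pairs matched by the Best-first allocation is at least the number of ask-bid pairs matched by the optimal allocation (which matches the i-th highest bid to the i-th lowest ask until a pair is not matchable). -/

import Mathlib

/-- Extract the minimum-value unmatched ask from a list, with a fixed
tie-breaking rule (earlier list positions are preferred). Returns the
minimum together with the remaining list. -/
noncomputable def extractMin : List ℝ → Option (ℝ × List ℝ)
  | [] => none
  | a :: as =>
    match extractMin as with
    | none => some (a, [])
    | some (m, rest) => if a ≤ m then some (a, as) else some (m, a :: rest)

/-- State of the Best-first (greedy) allocation: the currently unmatched asks,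
the matched (ask, bid) pairs in match order, and the unmatched bids. -/
structure BfState where
  unmatchedAsks : List ℝ
  matched : List (ℝ × ℝ)
  unmatchedBids : List ℝ

/-- One step of the Best-first allocation: when bid `b` arrives, match it to the
minimum unmatched ask `a` if `a ≤ b`; otherwise leave `b` unmatched. -/
noncomputable def bfStep (s : BfState) (b : ℝ) : BfState :=
  match extractMin s.unmatchedAsks with
  | some (a, rest) =>
      if a ≤ b then ⟨rest, s.matched ++ [(a, b)], s.unmatchedBids⟩
      else ⟨s.unmatchedAsks, s.matched, s.unmatchedBids ++ [b]⟩
  | none => ⟨s.unmatchedAsks, s.matched, s.unmatchedBids ++ [b]⟩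

/-- Run the Best-first allocation on the bids in arrival order. -/
noncomputable def bfRun (asks bids : List ℝ) : BfState :=
  bids.foldl bfStep ⟨asks, [], []⟩

/-- Insertion into an ascending-sorted list. -/
noncomputable def insertAsc (x : ℝ) : List ℝ → List ℝ
  | [] => [x]
  | y :: ys => if x ≤ y then x :: y :: ys else y :: insertAsc x ys

/-- Sort a list of reals in ascending order. -/
noncomputable def sortAsc (l : List ℝ) : List ℝ := l.foldr insertAsc []

/-- Sort a list of reals in descending order. -/
noncomputable def sortDesc (l : List ℝ) : List ℝ := (sortAsc l).reverse

/-- Match the i-th element of the first list with the i-th element of the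
second, stopping as soon as a pair is not matchable (`a ≤ b` fails). -/
noncomputable def matchPrefix : List ℝ → List ℝ → List (ℝ × ℝ)
  | a :: as, b :: bs => if a ≤ b then (a, b) :: matchPrefix as bs else []
  | _, _ => []

/-- The optimal allocation: match the highest bid with the lowest ask, the
second highest bid with the second lowest ask, and so on, stopping as soon as
a pair is not matchable. -/
noncomputable def optPairs (asks bids : List ℝ) : List (ℝ × ℝ) :=
  matchPrefix (sortAsc asks) (sortDesc bids)

/-- A feasible allocation: a partial matching (multiset of (ask, bid) pairs)
using each ask and each bid at most once, with `a ≤ b` for every matched pair. -/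
def IsFeasible (asks bids : List ℝ) (M : Multiset (ℝ × ℝ)) : Prop :=
  M.map Prod.fst ≤ (asks : Multiset ℝ) ∧
  M.map Prod.snd ≤ (bids : Multiset ℝ) ∧
  ∀ p ∈ M, p.1 ≤ p.2

/-- Social welfare of an allocation: sum of matched bid values plus the sum of
the values of the unmatched asks. -/
noncomputable def welfare (asks : List ℝ) (M : Multiset (ℝ × ℝ)) : ℝ :=
  (M.map Prod.snd).sum + ((asks : Multiset ℝ) - M.map Prod.fst).sum

/-- Social welfare of the Best-first allocation. -/
noncomputable def bfWelfare (asks bids : List ℝ) : ℝ :=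
  ((bfRun asks bids).matched.map Prod.snd).sum + (bfRun asks bids).unmatchedAsks.sum

/-- Maximum social welfare over all feasible allocations. -/
noncomputable def OptW (asks bids : List ℝ) : ℝ :=
  sSup {w : ℝ | ∃ M : Multiset (ℝ × ℝ), IsFeasible asks bids M ∧ w = welfare asks M}

/-!
Let `k` be the number of optimal trades and `t` a threshold lying in every interval
`[a, b]` of an optimally matched pair; since the optimal pairs form nested intervals,
such a `t` exists, and then at least `k` asks are `≤ t` and at least `k` bids are `≥ t`.
Along the greedy run the quantity
`#matched + min (#unmatched asks ≤ t) (#remaining bids ≥ t)` never decreases: a trade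
lowers the minimum by at most one, and a rejected bid `b ≥ t` means that every unmatched
ask exceeds `t`. Hence the greedy run ends with at least `k` trades.
-/

lemma extractMin_eq_none {l : List ℝ} (h : extractMin l = none) : l = [] := by
  cases l with
  | nil => rfl
  | cons a as =>
    rw [extractMin] at h
    rcases has : extractMin as with _ | ⟨m, rest⟩ <;> rw [has] at h
    · simp at h
    · by_cases hc : a ≤ m <;> simp [hc] at h

lemma extractMin_eq_some {l : List ℝ} {m : ℝ} {rest : List ℝ}
    (h : extractMin l = some (m, rest)) : l.Perm (m :: rest) ∧ ∀ x ∈ l, m ≤ x := by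
  induction l generalizing m rest with
  | nil => simp [extractMin] at h
  | cons a as ih =>
    rw [extractMin] at h
    rcases has : extractMin as with _ | ⟨m', rest'⟩
    · rw [has] at h
      obtain ⟨rfl, rfl⟩ : a = m ∧ [] = rest := by simpa using h
      simp [extractMin_eq_none has]
    · obtain ⟨hperm, hmin⟩ := ih has
      rw [has] at h
      by_cases hc : a ≤ m'
      · obtain ⟨rfl, rfl⟩ : a = m ∧ as = rest := by simpa [hc] using h
        exact ⟨.refl _, List.forall_mem_cons.2 ⟨le_rfl, fun x hx => hc.trans (hmin x hx)⟩⟩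
      · obtain ⟨rfl, rfl⟩ : m' = m ∧ a :: rest' = rest := by simpa [hc] using h
        exact ⟨(hperm.cons a).trans (.swap _ _ _),
          List.forall_mem_cons.2 ⟨(not_le.1 hc).le, hmin⟩⟩

noncomputable def bfPotential (t : ℝ) (s : BfState) (bids : List ℝ) : ℕ :=
  s.matched.length + min (s.unmatchedAsks.countP (· ≤ t)) (bids.countP (t ≤ ·))

lemma bfPotential_le_bfStep (t : ℝ) (s : BfState) (b : ℝ) (bids : List ℝ) :
    bfPotential t s (b :: bids) ≤ bfPotential t (bfStep s b) bids := by
  unfold bfPotential bfStep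
  rw [List.countP_cons]
  rcases hs : extractMin s.unmatchedAsks with _ | ⟨a, rest⟩
  · simp [extractMin_eq_none hs]
  obtain ⟨hperm, hmin⟩ := extractMin_eq_some hs
  by_cases hab : a ≤ b
  · have hcount : s.unmatchedAsks.countP (· ≤ t) ≤ rest.countP (· ≤ t) + 1 := by
      rw [hperm.countP_eq, List.countP_cons]
      split <;> omega
    simp only [hab, if_true, List.length_append, List.length_singleton]
    split <;> omega
  · simp only [hab, if_false]
    by_cases htb : t ≤ b
    · -- every unmatched ask is at least `a > b ≥ t`
      have hnone : s.unmatchedAsks.countP (· ≤ t) = 0 := List.countP_eq_zero.2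
        fun x hx hxt => hab ((hmin x hx).trans ((decide_eq_true_iff.1 hxt).trans htb))
      simp [hnone]
    · simp [htb]

lemma bfPotential_le_foldl (t : ℝ) (s : BfState) (bids : List ℝ) :
    bfPotential t s bids ≤ (bids.foldl bfStep s).matched.length := by
  induction bids generalizing s with
  | nil => simp [bfPotential]
  | cons b bids ih => exact (bfPotential_le_bfStep t s b bids).trans (ih _)

lemma min_countP_le_bfRun_matched_length (t : ℝ) (asks bids : List ℝ) :
    min (asks.countP (· ≤ t)) (bids.countP (t ≤ ·)) ≤ (bfRun asks bids).matched.length := by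
  simpa [bfPotential, bfRun] using bfPotential_le_foldl t ⟨asks, [], []⟩ bids

lemma le_of_mem_matchPrefix {as bs : List ℝ} {p : ℝ × ℝ} (hp : p ∈ matchPrefix as bs) :
    p.1 ≤ p.2 := by
  induction as generalizing bs with
  | nil => simp [matchPrefix] at hp
  | cons a as ih =>
    rcases bs with _ | ⟨b, bs⟩
    · simp [matchPrefix] at hp
    rw [matchPrefix] at hp
    split at hp
    · rcases List.mem_cons.1 hp with rfl | hp
      exacts [‹a ≤ b›, ih hp]
    · simp at hp

lemma map_fst_matchPrefix_prefix (as bs : List ℝ) : (matchPrefix as bs).map Prod.fst <+: as := by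
  induction as generalizing bs with
  | nil => simp [matchPrefix]
  | cons a as ih =>
    rcases bs with _ | ⟨b, bs⟩
    · simp [matchPrefix]
    rw [matchPrefix]
    split
    · exact (List.prefix_cons_inj a).2 (ih bs)
    · exact List.nil_prefix

lemma map_snd_matchPrefix_prefix (as bs : List ℝ) : (matchPrefix as bs).map Prod.snd <+: bs := by
  induction as generalizing bs with
  | nil => simp [matchPrefix]
  | cons a as ih =>
    rcases bs with _ | ⟨b, bs⟩
    · simp [matchPrefix]
    rw [matchPrefix]
    split
    · exact (List.prefix_cons_inj b).2 (ih bs)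
    · exact List.nil_prefix

lemma length_matchPrefix_le_min_countP {as bs : List ℝ} {t : ℝ}
    (ht : ∀ p ∈ matchPrefix as bs, p.1 ≤ t ∧ t ≤ p.2) :
    (matchPrefix as bs).length ≤ min (as.countP (· ≤ t)) (bs.countP (t ≤ ·)) := by
  have hfst : ∀ x ∈ (matchPrefix as bs).map Prod.fst, x ≤ t :=
    List.forall_mem_map.2 fun p hp => (ht p hp).1
  have hsnd : ∀ x ∈ (matchPrefix as bs).map Prod.snd, t ≤ x :=
    List.forall_mem_map.2 fun p hp => (ht p hp).2
  refine le_min ?_ ?_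
  · calc (matchPrefix as bs).length
        = ((matchPrefix as bs).map Prod.fst).countP (· ≤ t) := by
          rw [List.countP_eq_length.2 fun x hx => decide_eq_true (hfst x hx), List.length_map]
      _ ≤ as.countP (· ≤ t) := (map_fst_matchPrefix_prefix as bs).sublist.countP_le
  · calc (matchPrefix as bs).length
        = ((matchPrefix as bs).map Prod.snd).countP (t ≤ ·) := by
          rw [List.countP_eq_length.2 fun x hx => decide_eq_true (hsnd x hx), List.length_map]
      _ ≤ bs.countP (t ≤ ·) := (map_snd_matchPrefix_prefix as bs).sublist.countP_le

lemma exists_forall_mem_matchPrefix_fst_le_le_snd {as bs : List ℝ} (has : as.Pairwise (· ≤ ·))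
    (hbs : bs.Pairwise (· ≥ ·)) : ∃ t, ∀ p ∈ matchPrefix as bs, p.1 ≤ t ∧ t ≤ p.2 := by
  induction as generalizing bs with
  | nil => simp [matchPrefix]
  | cons a as ih =>
    rcases bs with _ | ⟨b, bs⟩
    · simp [matchPrefix]
    rw [List.pairwise_cons] at has hbs
    rw [matchPrefix]
    split_ifs with hab
    · obtain ⟨t, ht⟩ := ih has.2 hbs.2
      -- clamp the common point of the inner intervals into `[a, b]`
      refine ⟨max a (min t b), List.forall_mem_cons.2 ⟨⟨le_max_left _ _, by simp [hab]⟩, ?_⟩⟩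
      intro p hp
      have hap : a ≤ p.1 :=
        has.1 _ ((map_fst_matchPrefix_prefix as bs).subset (List.mem_map_of_mem hp))
      have hpb : p.2 ≤ b :=
        hbs.1 _ ((map_snd_matchPrefix_prefix as bs).subset (List.mem_map_of_mem hp))
      have hpp := le_of_mem_matchPrefix hp
      obtain ⟨hpt, htp⟩ := ht p hp
      exact ⟨le_max_of_le_right (le_min hpt (hpp.trans hpb)),
        max_le (hap.trans hpp) ((min_le_left _ _).trans htp)⟩
    · simp

lemma sortAsc_eq_insertionSort (l : List ℝ) : sortAsc l = l.insertionSort (· ≤ ·) := by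
  have insertAsc_eq (x : ℝ) (l : List ℝ) : insertAsc x l = l.orderedInsert (· ≤ ·) x := by
    induction l with
    | nil => rfl
    | cons y ys ih => rw [insertAsc, List.orderedInsert, ih]
  rw [sortAsc, List.insertionSort]
  congr 1
  funext x l
  exact insertAsc_eq x l

lemma sortAsc_perm (l : List ℝ) : (sortAsc l).Perm l := by
  rw [sortAsc_eq_insertionSort]
  exact List.perm_insertionSort _ l

lemma pairwise_sortAsc (l : List ℝ) : (sortAsc l).Pairwise (· ≤ ·) := by
  rw [sortAsc_eq_insertionSort]
  exact List.pairwise_insertionSort _ l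

lemma sortDesc_perm (l : List ℝ) : (sortDesc l).Perm l :=
  (List.reverse_perm _).trans (sortAsc_perm l)

lemma pairwise_sortDesc (l : List ℝ) : (sortDesc l).Pairwise (· ≥ ·) :=
  List.pairwise_reverse.2 (pairwise_sortAsc l)

lemma exists_length_optPairs_le_min_countP (asks bids : List ℝ) :
    ∃ t, (optPairs asks bids).length ≤ min (asks.countP (· ≤ t)) (bids.countP (t ≤ ·)) := by
  obtain ⟨t, ht⟩ :=
    exists_forall_mem_matchPrefix_fst_le_le_snd (pairwise_sortAsc asks) (pairwise_sortDesc bids)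
  refine ⟨t, ?_⟩
  rw [← (sortAsc_perm asks).countP_eq, ← (sortDesc_perm bids).countP_eq]
  exact length_matchPrefix_le_min_countP ht

theorem bf_trades_at_least_opt_general (asks bids : List ℝ) :
    (optPairs asks bids).length ≤ (bfRun asks bids).matched.length := by
  obtain ⟨t, ht⟩ := exists_length_optPairs_le_min_countP asks bids
  exact ht.trans (min_countP_le_bfRun_matched_length t asks bids)

/-- The Best-first allocation makes at least as many trades
as the optimal allocation (which matches the i-th highest bid to the i-th
lowest ask until a pair is not matchable). -/
theorem bf_trades_at_least_opt (asks bids : List ℝ)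
    (ha : ∀ a ∈ asks, 0 ≤ a) (hb : ∀ b ∈ bids, 0 ≤ b) :
    (optPairs asks bids).length ≤ (bfRun asks bids).matched.length :=
  bf_trades_at_least_opt_general asks bids
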